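/- Let φ_t^{k+t⋆} : FΩ_k → FΩ_{k+t} send each k-subset to the sum of the (k+t)-subsets containing it, and φ_t^{k+t} : FΩ_{k+t} → FΩ_k send each (k+t)-subset to the sum of its k-subsets. Then for Y ∈ Ω_k: Y φ_t^{k+t⋆} φ_t^{k+t} = Σ_{d=0}^{t} C(n−k−d, t−d) Σ_{X ∈ Ω_k, |X △ Y| = 2d} X. -/

import Mathlib

/-- The free module over `R` on the `k`-element subsets of `{1,…,n}` (here `k : ℤ`,
so that the module is zero for `k < 0`). -/
def FOmega (R : Type*) [CommRing R] (n : ℕ) (k : ℤ) : Type _ :=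
  {s : Finset (Fin n) // (s.card : ℤ) = k} →₀ R

noncomputable instance (R : Type*) [CommRing R] (n : ℕ) (k : ℤ) :
    AddCommGroup (FOmega R n k) := Finsupp.instAddCommGroup

noncomputable instance (R : Type*) [CommRing R] (n : ℕ) (k : ℤ) :
    Module R (FOmega R n k) := Finsupp.module _ _

/-- The multistep boundary map `FΩ_a → FΩ_b`, sending a subset `Y` of size `a`
to the sum of all its subsets of size `b` (this is `φ_t^a` with `t = a - b`). -/
noncomputable def phi (R : Type*) [CommRing R] (n : ℕ) (a b : ℤ) :
    FOmega R n a →ₗ[R] FOmega R n b :=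
  Finsupp.lift _ R _ fun Y =>
    ∑ X ∈ (Y.1.powerset.filter fun X => (X.card : ℤ) = b).attach,
      Finsupp.single ⟨X.1, (Finset.mem_filter.mp X.2).2⟩ (1 : R)

/-- The dual multistep map `FΩ_a → FΩ_b` (for `b ≥ a`), sending a subset `Y` of size
`a` to the sum of all subsets of size `b` containing it (this is `φ_t^{b⋆}` with
`t = b - a`). -/
noncomputable def phiStar (R : Type*) [CommRing R] (n : ℕ) (a b : ℤ) :
    FOmega R n a →ₗ[R] FOmega R n b :=
  Finsupp.lift _ R _ fun Y =>
    ∑ Z ∈ Finset.univ.filter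
        (fun Z : {s : Finset (Fin n) // (s.card : ℤ) = b} => Y.1 ⊆ Z.1),
      Finsupp.single Z (1 : R)

open scoped symmDiff

/-!
The coefficient of a `k`-set `X` in `Y φ⋆ φ` is the number of `(k + t)`-sets containing
`X ∪ Y`. If `|X △ Y| = 2d` then `|X ∪ Y| = k + d`, so there are `C(n - k - d, t - d)` such
sets when `d ≤ t` and none otherwise.
-/

open Finset

theorem Finset.card_symmDiff_of_card_eq {α : Type*} [DecidableEq α] {s t : Finset α}
    (h : #s = #t) : #(s ∆ t) = 2 * #(t \ s) := by
  rw [Finset.symmDiff_def, card_union_of_disjoint disjoint_sdiff_sdiff,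
    card_sdiff_eq_card_sdiff_iff.mpr h, two_mul]

theorem Finset.card_filter_subset_val {α : Type*} [Fintype α] [DecidableEq α]
    (U : Finset α) {m : ℕ} {c : ℤ} (hc : c = m) :
    #{Z : {s : Finset α // (#s : ℤ) = c} | U ⊆ Z.1} =
      if #U ≤ m then (Fintype.card α - #U).choose (m - #U) else 0 := by
  subst hc
  rw [← Fintype.card_subtype, Fintype.card_congr (Equiv.subtypeSubtypeEquivSubtypeInter _ _),
    Fintype.card_subtype]
  split_ifs with hU
  · rw [← card_univ, ← card_filter_powersetCard_subset U univ m (subset_univ U) hU]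
    congr 1
    ext s
    simp
  · rw [card_eq_zero, filter_eq_empty_iff]
    rintro s - ⟨hs, hUs⟩
    have := card_le_card hUs
    omega

theorem Finset.sum_smul_sum_filter {ι κ R M : Type*} [Semiring R] [AddCommMonoid M]
    [Module R M] (s : Finset κ) (t : Finset ι) (c : κ → R) (p : κ → ι → Prop)
    [∀ d x, Decidable (p d x)] (v : ι → M) :
    ∑ d ∈ s, c d • ∑ x ∈ t with p d x, v x = ∑ x ∈ t, (∑ d ∈ s with p d x, c d) • v x := by
  simp only [sum_filter, smul_sum, sum_smul, smul_ite, ite_smul, smul_zero, zero_smul]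
  exact sum_comm

theorem Finset.sum_sum_filter {ι κ M : Type*} [AddCommMonoid M]
    (s : Finset κ) (t : Finset ι) (p : κ → ι → Prop) [∀ d x, Decidable (p d x)] (v : ι → M) :
    ∑ d ∈ s, ∑ x ∈ t with p d x, v x = ∑ x ∈ t, #{d ∈ s | p d x} • v x := by
  simp only [sum_filter]
  rw [sum_comm]
  simp only [← sum_filter, sum_const]

section

variable {R : Type*} [CommRing R] {n : ℕ}

theorem phiStar_single (a b : ℤ) (Y : {s : Finset (Fin n) // (#s : ℤ) = a}) :
    phiStar R n a b (Finsupp.single Y 1) =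
      (∑ Z : {s : Finset (Fin n) // (#s : ℤ) = b} with Y.1 ⊆ Z.1, Finsupp.single Z 1 :
        FOmega R n b) := by
  erw [phiStar, Finsupp.lift_apply, Finsupp.sum_single_index (by simp), one_smul]

theorem phi_single (a b : ℤ) (Z : {s : Finset (Fin n) // (#s : ℤ) = a}) :
    phi R n a b (Finsupp.single Z 1) =
      (∑ X : {s : Finset (Fin n) // (#s : ℤ) = b} with X.1 ⊆ Z.1, Finsupp.single X 1 :
        FOmega R n b) := by
  erw [phi, Finsupp.lift_apply, Finsupp.sum_single_index (by simp), one_smul]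
  refine Finset.sum_bij' (fun W _ => ⟨W.1, (mem_filter.mp W.2).2⟩)
    (fun X hX => ⟨X.1, mem_filter.mpr ⟨mem_powerset.mpr (mem_filter.mp hX).2, X.2⟩⟩)
    ?_ ?_ ?_ ?_ (fun _ _ => rfl) <;> simp +contextual

theorem phi_phiStar_single (a b c : ℤ) (Y : {s : Finset (Fin n) // (#s : ℤ) = a}) :
    phi R n b c (phiStar R n a b (Finsupp.single Y 1)) =
      ∑ X : {s : Finset (Fin n) // (#s : ℤ) = c},
        (#{Z : {s : Finset (Fin n) // (#s : ℤ) = b} | Y.1 ∪ X.1 ⊆ Z.1} : R) •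
          Finsupp.single X 1 := by
  rw [phiStar_single]
  erw [map_sum]
  simp_rw [phi_single]
  have h := sum_sum_filter {Z : {s : Finset (Fin n) // (#s : ℤ) = b} | Y.1 ⊆ Z.1} univ
    (fun Z (X : {s : Finset (Fin n) // (#s : ℤ) = c}) => X.1 ⊆ Z.1)
    fun X => Finsupp.single X (1 : R)
  simp only [← Nat.cast_smul_eq_nsmul R, filter_filter, ← union_subset_iff] at h
  exact h

end

theorem phiStar_phi_apply_general (R : Type*) [CommRing R] (n : ℕ) (k t : ℕ)
    (Y : {s : Finset (Fin n) // (s.card : ℤ) = (k : ℤ)}) :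
    phi R n ((k : ℤ) + t) k (phiStar R n k ((k : ℤ) + t) (Finsupp.single Y 1)) =
      ∑ d ∈ Finset.range (t + 1), ((n - k - d).choose (t - d) : R) •
        ∑ X ∈ Finset.univ.filter
            (fun X : {s : Finset (Fin n) // (s.card : ℤ) = (k : ℤ)} =>
              (X.1 ∆ Y.1).card = 2 * d),
          Finsupp.single X (1 : R) := by
  rw [phi_phiStar_single, sum_smul_sum_filter]
  refine sum_congr rfl fun X _ => ?_
  have hX : #X.1 = k := by exact_mod_cast X.2
  have hY : #Y.1 = k := by exact_mod_cast Y.2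
  rw [card_symmDiff_of_card_eq (hX.trans hY.symm),
    card_filter_subset_val _ (m := k + t) (by push_cast; rfl),
    ← card_sdiff_add_card, hX]
  congr 1
  simp only [Nat.mul_left_cancel_iff two_pos, sum_filter, sum_ite_eq, mem_range,
    Fintype.card_fin, Nat.cast_ite, Nat.cast_zero]
  refine if_congr (by omega) ?_ rfl
  congr 2 <;> omega

/-- for a `k`-subset `Y`, applying the dual map `φ_t^{k+t⋆}` and then
`φ_t^{k+t}` gives `∑_{d=0}^{t} C(n-k-d, t-d) ∑_{X : |X △ Y| = 2d} X`. -/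
theorem phiStar_phi_apply (R : Type*) [CommRing R] (n : ℕ) (k t : ℕ)
    (hkn : k + t ≤ n)
    (Y : {s : Finset (Fin n) // (s.card : ℤ) = (k : ℤ)}) :
    phi R n ((k : ℤ) + t) k (phiStar R n k ((k : ℤ) + t) (Finsupp.single Y 1)) =
      ∑ d ∈ Finset.range (t + 1), ((n - k - d).choose (t - d) : R) •
        ∑ X ∈ Finset.univ.filter
            (fun X : {s : Finset (Fin n) // (s.card : ℤ) = (k : ℤ)} =>
              (X.1 ∆ Y.1).card = 2 * d),
          Finsupp.single X (1 : R) :=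
  phiStar_phi_apply_general R n k t Y
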